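/- arXiv:2103.07436 — 3 statements merged into one kernel-verified Lean document; each statement's English description precedes it below -/
import Mathlib

section
/- Let C be a category with pullbacks, x : P ⟶ X and g : Y ⟶ X morphisms, and let Q := P ×_X Y be the pullback of x and g, with second projection pr : Q ⟶ Y. Then there is an isomorphism of simplicial objects in C between the Čech nerve of pr : Q ⟶ Y and the simplicial object whose n-th object is the pullback of the augmentation Č_n(x) ⟶ X along g, with simplicial operators induced from those of the Čech nerve of x; in particular, for every n, Č_n(pr) ≅ Č_n(x) ×_X Y compatibly with all face and degeneracy maps. (Lemma 'Monodromy'(ii): the Čech nerve of the fiber x*(Y) → Y is the base change along g of the Čech nerve of x.) -/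
/-!
A family of maps `T ⟶ P ×_X Y`, indexed by `ι`, that agree after projecting to `Y` is the same as
a map `T ⟶ Y` together with a family of maps `T ⟶ P` that agree over `X` with its image there.
So the wide pullback over `Y` of `ι` copies of `P ×_X Y` is the wide pullback over `X` of `ι`
copies of `P`, base changed along `g`, naturally in `ι`; at `ι = Fin (n + 1)` this is the claim.
-/

open CategoryTheory CategoryTheory.Limits

noncomputable section

universe v u

variable {C : Type u} [Category.{v} C]

@[simps]
def baseChangeFunctor [HasPullbacks C] {J : Type*} [Category J] {X Y : C} (g : Y ⟶ X)
    (A : J ⥤ C) (ε : A ⟶ (Functor.const J).obj X) : J ⥤ C where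
  obj j := pullback (ε.app j) g
  map φ :=
    pullback.map _ _ _ _ (A.map φ) (𝟙 Y) (𝟙 X)
      (by simp [(ε.naturality φ).symm]) (by simp)
  map_id j := by apply pullback.hom_ext <;> simp
  map_comp φ ψ := by apply pullback.hom_ext <;> simp [pullback.map_comp]

namespace CategoryTheory.Limits

universe w w'

attribute [local simp] WidePullback.lift_π WidePullback.lift_π_assoc WidePullback.lift_base
  WidePullback.lift_base_assoc pullback.lift_fst pullback.lift_fst_assoc pullback.lift_snd
  pullback.lift_snd_assoc

variable {ι : Type w} {P X Y : C} (x : P ⟶ X) (g : Y ⟶ X) [HasPullback x g]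
  [HasWidePullback X (fun _ : ι => P) (fun _ => x)]
  [HasWidePullback Y (fun _ : ι => pullback x g) (fun _ => pullback.snd x g)]
  [HasPullback (WidePullback.base (fun _ : ι => x)) g]

@[simps]
def widePullbackBaseChangeIso :
    widePullback Y (fun _ : ι => pullback x g) (fun _ => pullback.snd x g) ≅
      pullback (WidePullback.base (fun _ : ι => x)) g where
  hom := pullback.lift
    (WidePullback.lift (WidePullback.base _ ≫ g) (fun i => WidePullback.π _ i ≫ pullback.fst x g)
      (fun i => by simp [pullback.condition]))
    (WidePullback.base _) (by simp)
  inv := WidePullback.lift (pullback.snd _ _)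
    (fun i => pullback.lift (pullback.fst _ _ ≫ WidePullback.π _ i) (pullback.snd _ _)
      (by simp [pullback.condition]))
    (by simp)
  hom_inv_id := by ext <;> simp
  inv_hom_id := by ext <;> simp [pullback.condition]

variable {ι' : Type w'} [HasWidePullback X (fun _ : ι' => P) (fun _ => x)]
  [HasWidePullback Y (fun _ : ι' => pullback x g) (fun _ => pullback.snd x g)]
  [HasPullback (WidePullback.base (fun _ : ι' => x)) g]

theorem widePullbackBaseChangeIso_hom_naturality (f : ι → ι') :
    WidePullback.lift (WidePullback.base _) (fun i => WidePullback.π _ (f i)) (by simp) ≫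
        (widePullbackBaseChangeIso x g).hom =
      (widePullbackBaseChangeIso x g).hom ≫
        pullback.map _ _ _ _
          (WidePullback.lift (WidePullback.base _) (fun i => WidePullback.π _ (f i)) (by simp))
          (𝟙 Y) (𝟙 X) (by simp) (by simp) := by
  ext <;> simp

end CategoryTheory.Limits

theorem cechNerve_baseChange [HasFiniteWidePullbacks C] {P X Y : C} (x : P ⟶ X) (g : Y ⟶ X) :
    Nonempty
      ((Arrow.mk (pullback.snd x g)).cechNerve ≅
        baseChangeFunctor g (Arrow.mk x).cechNerve (Arrow.mk x).augmentedCechNerve.hom) :=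
  ⟨NatIso.ofComponents (fun _ => widePullbackBaseChangeIso x g)
    fun _ => widePullbackBaseChangeIso_hom_naturality x g _⟩
end
end

section
/- Let G be a group acting on a type E, and let p : E → B be a function satisfying p (g • e) = p e for all g : G, e : E. Assume the shear map is bijective. Then for every n, the bar map (Fin n → G) × E → Č_n(p), sending (g, e) to the function f : Fin (n+1) → E defined downward-recursively by f n := e and f i := g i • f (i+1), is a bijection. (This is the levelwise identification B^•_{Ω}(∗, −) ≅ Č^• underlying Lemma 'Action' and Proposition 'King of Kings': when the based loop object E ×_B E is trivialized by a group G, the Čech nerve of p is the two-sided bar construction of the G-action.) -/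
/-!
STATEMENT 4: Let `G` act on `E` and `p : E → B` be `G`-invariant with bijective shear map.
Then for every `n`, the bar map `(Fin n → G) × E → Č_n(p)`, sending `(g, e)` to the tuple
`f` defined downward-recursively by `f n := e` and `f i := g i • f (i+1)`, is a bijection.
-/

/-- The shear map `G × E → E ×_B E`, `(g, e) ↦ (g • e, e)`. -/
def shearMap {G E B : Type*} [Group G] [MulAction G E] (p : E → B)
    (hp : ∀ (g : G) (e : E), p (g • e) = p e) :
    G × E → {z : E × E // p z.1 = p z.2} :=
  fun ge => ⟨(ge.1 • ge.2, ge.2), hp ge.1 ge.2⟩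

/-- The bar tuple: `barTuple n g e` is the function `f : Fin (n+1) → E` determined
downward-recursively by `f n = e` and `f i = g i • f (i + 1)`. -/
def barTuple {G E : Type*} [Group G] [MulAction G E] :
    (n : ℕ) → (Fin n → G) → E → Fin (n + 1) → E
  | 0, _, e => fun _ => e
  | n + 1, g, e => Fin.cases (g 0 • barTuple n (Fin.tail g) e 0) (barTuple n (Fin.tail g) e)

lemma p_barTuple {G E B : Type*} [Group G] [MulAction G E] (p : E → B)
    (hp : ∀ (g : G) (e : E), p (g • e) = p e) :
    ∀ (n : ℕ) (g : Fin n → G) (e : E) (i : Fin (n + 1)), p (barTuple n g e i) = p e := by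
  intro n
  induction n with
  | zero => intro g e i; rfl
  | succ n ih =>
    intro g e i
    refine Fin.cases ?_ ?_ i
    · simp only [barTuple, Fin.cases_zero, hp]
      exact ih (Fin.tail g) e 0
    · intro j
      simp only [barTuple, Fin.cases_succ]
      exact ih (Fin.tail g) e j

lemma barTuple_last {G E : Type*} [Group G] [MulAction G E] :
    ∀ (n : ℕ) (g : Fin n → G) (e : E), barTuple n g e (Fin.last n) = e
  | 0, _, _ => rfl
  | n + 1, g, e => by
    have h : (Fin.last (n + 1)) = Fin.succ (Fin.last n) := rfl
    rw [h]
    simp only [barTuple, Fin.cases_succ]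
    exact barTuple_last n (Fin.tail g) e

lemma barTuple_castSucc {G E : Type*} [Group G] [MulAction G E] :
    ∀ (n : ℕ) (g : Fin n → G) (e : E) (i : Fin n),
      barTuple n g e i.castSucc = g i • barTuple n g e i.succ := by
  intro n
  induction n with
  | zero => intro _ _ i; exact i.elim0
  | succ n ih =>
    intro g e i
    refine Fin.cases ?_ ?_ i
    · show barTuple (n + 1) g e (Fin.castSucc 0) = g 0 • barTuple (n + 1) g e (Fin.succ 0)
      have h0 : (Fin.castSucc (0 : Fin (n+1))) = 0 := rfl
      rw [h0]
      simp only [barTuple, Fin.cases_zero, Fin.cases_succ]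
    · intro j
      have h1 : (Fin.castSucc j.succ) = Fin.succ (Fin.castSucc j) := rfl
      rw [h1]
      simp only [barTuple, Fin.cases_succ]
      exact ih (Fin.tail g) e j

lemma barTuple_injAux {G E B : Type*} [Group G] [MulAction G E] (p : E → B)
    (hp : ∀ (g : G) (e : E), p (g • e) = p e)
    (hinj : Function.Injective (shearMap p hp)) :
    ∀ (n : ℕ) (g g' : Fin n → G) (e e' : E),
      barTuple n g e = barTuple n g' e' → g = g' ∧ e = e' := by
  intro n
  induction n with
  | zero =>
    intro g g' e e' h
    refine ⟨funext fun i => i.elim0, ?_⟩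
    exact congrFun h 0
  | succ n ih =>
    intro g g' e e' h
    have htail : barTuple n (Fin.tail g) e = barTuple n (Fin.tail g') e' := by
      funext j
      have := congrFun h j.succ
      simpa only [barTuple, Fin.cases_succ] using this
    obtain ⟨hg, he⟩ := ih (Fin.tail g) (Fin.tail g') e e' htail
    have h0 := congrFun h 0
    simp only [barTuple, Fin.cases_zero, hg, he] at h0
    have hgg : g 0 = g' 0 := by
      have : shearMap p hp (g 0, barTuple n (Fin.tail g') e' 0)
          = shearMap p hp (g' 0, barTuple n (Fin.tail g') e' 0) := by
        exact Subtype.ext (Prod.ext h0 rfl)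
      exact (Prod.mk.injEq _ _ _ _).mp (hinj this) |>.1
    refine ⟨funext fun i => ?_, he⟩
    refine Fin.cases hgg (fun j => ?_) i
    exact congrFun hg j

lemma barTuple_surjAux {G E B : Type*} [Group G] [MulAction G E] (p : E → B)
    (hp : ∀ (g : G) (e : E), p (g • e) = p e)
    (hsurj : Function.Surjective (shearMap p hp)) :
    ∀ (n : ℕ) (f : Fin (n + 1) → E), (∀ i j, p (f i) = p (f j)) →
      ∃ (g : Fin n → G) (e : E), barTuple n g e = f := by
  intro n
  induction n with
  | zero =>
    intro f _
    exact ⟨(Fin.elim0 : Fin 0 → G), f 0, funext fun i => congrArg f (Subsingleton.elim (α := Fin 1) 0 i)⟩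
  | succ n ih =>
    intro f hf
    obtain ⟨g, e, hge⟩ := ih (fun j => f j.succ) (fun i j => hf i.succ j.succ)
    obtain ⟨⟨g0, x⟩, hx⟩ := hsurj ⟨(f 0, f 1), hf 0 1⟩
    have hx1 : g0 • x = f 0 := congrArg (fun z => z.1.1) hx
    have hx2 : x = f 1 := congrArg (fun z => z.1.2) hx
    refine ⟨Fin.cons g0 g, e, funext fun i => ?_⟩
    refine Fin.cases ?_ (fun j => ?_) i
    · simp only [barTuple, Fin.cases_zero, Fin.cons_zero, Fin.tail_cons, hge]
      rw [← hx1, hx2]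
      rfl
    · simp only [barTuple, Fin.cases_succ, Fin.tail_cons, hge]

theorem bar_map_bijective {G E B : Type*} [Group G] [MulAction G E] (p : E → B)
    (hp : ∀ (g : G) (e : E), p (g • e) = p e)
    (hshear : Function.Bijective (shearMap p hp)) (n : ℕ) :
    Function.Bijective
      (fun ge : (Fin n → G) × E =>
        (⟨barTuple n ge.1 ge.2, fun i j =>
            (p_barTuple p hp n ge.1 ge.2 i).trans (p_barTuple p hp n ge.1 ge.2 j).symm⟩ :
          {f : Fin (n + 1) → E // ∀ i j, p (f i) = p (f j)})) ∧
    (∀ (g : Fin n → G) (e : E), barTuple n g e (Fin.last n) = e) ∧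
    (∀ (g : Fin n → G) (e : E) (i : Fin n),
      barTuple n g e i.castSucc = g i • barTuple n g e i.succ) := by
  refine ⟨⟨?_, ?_⟩, barTuple_last n, barTuple_castSucc n⟩
  · intro ⟨g, e⟩ ⟨g', e'⟩ h
    have := barTuple_injAux p hp hshear.1 n g g' e e' (congrArg Subtype.val h)
    exact Prod.ext this.1 this.2
  · intro ⟨f, hf⟩
    obtain ⟨g, e, h⟩ := barTuple_surjAux p hp hshear.2 n f hf
    exact ⟨(g, e), Subtype.ext h⟩
end

section
/- Let G be a group acting on a type E, and let p : E → B be a function satisfying p (g • e) = p e for all g : G, e : E. Assume the shear map is bijective. Then there is an isomorphism of simplicial sets between the nerve of the action groupoid of G on E (Mathlib: the nerve of CategoryTheory.ActionCategory G E) and the Čech nerve of p, which in simplicial degree n identifies a string of n composable morphisms in the action groupoid, determined by a base point e : E and group elements g₁, …, g_n : G, with the tuple ((g₁g₂⋯g_n) • e, (g₂⋯g_n) • e, …, g_n • e, e) ∈ Č_n(p). (Simplicial form of the equivalence B^•_{G}(∗, E) ≅ Č^•(E → B) of Lemma 'Action'/Proposition 'King of Kings' in the topos of sets.) -/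
/-!
STATEMENT 5: Let `G` act on `E`, `p : E → B` be `G`-invariant with bijective shear map.
Then the nerve of the action groupoid of `G` on `E` is isomorphic, as a simplicial set,
to the Čech nerve of `p`; in degree `n` the isomorphism sends a string of `n` composable
morphisms in the action groupoid (determined by a base point `e` and group elements
`g₁, …, g_n`, with vertices `(g₁⋯g_n) • e, (g₂⋯g_n) • e, …, g_n • e, e`) to the tuple of
the underlying points of its vertices.
-/

open CategoryTheory

/-- The Čech nerve of a function `p : E → B`, as a simplicial set: its `n`-simplices are
functions `f : Fin (n+1) → E` with `p ∘ f` constant, and the simplicial operators are given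
by precomposition with the monotone maps of `SimplexCategory`. -/
def cechSSet {E : Type u} {B : Type v} (p : E → B) : SSet.{u} where
  obj m := {f : Fin (m.unop.len + 1) → E // ∀ i j, p (f i) = p (f j)}
  map φ := TypeCat.ofHom fun f => ⟨fun i => f.1 (φ.unop.toOrderHom i), fun i j => f.2 _ _⟩

/-!
Injectivity of the shear map says the action is free, so the action groupoid is thin;
surjectivity says `G` is transitive on the fibres of `p`, so there is a morphism `x ⟶ y`
exactly when `p x = p y`. A simplex of the nerve of such a category is determined by its
vertices, which can be any tuple in one fibre: the vertex map onto the Čech nerve is bijective.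
-/

section NerveToCech

variable {C E : Type u} {B : Type v} [Category.{u} C] (p : E → B) (v : C → E)

def nerveToCechSSet (hv : ∀ {x y : C}, (x ⟶ y) → p (v x) = p (v y)) :
    nerve C ⟶ cechSSet p where
  app m := TypeCat.ofHom fun σ => ⟨fun i => v (σ.obj i), fun i j => by
    rcases le_total i j with h | h
    · exact hv (σ.map (homOfLE h))
    · exact (hv (σ.map (homOfLE h))).symm⟩
  naturality _ _ _ := rfl

variable {p v} (hv : ∀ {x y : C}, (x ⟶ y) → p (v x) = p (v y))

lemma nerveToCechSSet_app_injective [Quiver.IsThin C] (hinj : Function.Injective v)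
    (m : SimplexCategoryᵒᵖ) : Function.Injective ((nerveToCechSSet p v hv).app m) := by
  intro σ τ h
  have hobj : ∀ i, σ.obj i = τ.obj i := fun i =>
    hinj (congrFun (congrArg Subtype.val h) i)
  exact ComposableArrows.ext hobj fun _ _ => Subsingleton.elim _ _

lemma nerveToCechSSet_app_surjective (hsurj : Function.Surjective v)
    (hfull : ∀ x y : C, p (v x) = p (v y) → Nonempty (x ⟶ y))
    (m : SimplexCategoryᵒᵖ) : Function.Surjective ((nerveToCechSSet p v hv).app m) := by
  rintro ⟨f, hf⟩
  choose x hx using hsurj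
  have φ (i : Fin m.unop.len) : x (f i.castSucc) ⟶ x (f i.succ) :=
    (hfull _ _ (by rw [hx, hx]; exact hf _ _)).some
  refine ⟨ComposableArrows.mkOfObjOfMapSucc (fun i => x (f i)) φ, Subtype.ext ?_⟩
  funext i
  exact hx (f i)

lemma isIso_nerveToCechSSet [Quiver.IsThin C] (hbij : Function.Bijective v)
    (hfull : ∀ x y : C, p (v x) = p (v y) → Nonempty (x ⟶ y)) :
    IsIso (nerveToCechSSet p v hv) := by
  have (m : SimplexCategoryᵒᵖ) : IsIso ((nerveToCechSSet p v hv).app m) :=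
    (isIso_iff_bijective _).2 ⟨nerveToCechSSet_app_injective hv hbij.1 m,
      nerveToCechSSet_app_surjective hv hbij.2 hfull m⟩
  exact NatIso.isIso_of_isIso_app _

end NerveToCech

namespace CategoryTheory.ActionCategory

lemma apply_back_eq_of_hom {M X : Type*} {B : Type*} [Monoid M] [MulAction M X] {p : X → B}
    (hp : ∀ (g : M) (x : X), p (g • x) = p x) {x y : ActionCategory M X} (f : x ⟶ y) :
    p x.back = p y.back := by
  rw [← show f.1 • x.back = y.back from f.2, hp]

variable {G E B : Type*} [Group G] [MulAction G E] {p : E → B}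
  {hp : ∀ (g : G) (e : E), p (g • e) = p e}

lemma isThin_of_injective_shearMap (h : Function.Injective (shearMap p hp)) :
    Quiver.IsThin (ActionCategory G E) := fun x y => ⟨fun f g => by
  have hfg : f.1 • x.back = g.1 • x.back := f.2.trans g.2.symm
  have := h (a₁ := (f.1, x.back)) (a₂ := (g.1, x.back)) (Subtype.ext (Prod.ext hfg rfl))
  exact Subtype.ext (Prod.ext_iff.1 this).1⟩

lemma nonempty_hom_of_surjective_shearMap (h : Function.Surjective (shearMap p hp))
    (x y : ActionCategory G E) (hxy : p x.back = p y.back) : Nonempty (x ⟶ y) := by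
  obtain ⟨⟨g, e⟩, hge⟩ := h ⟨(y.back, x.back), hxy.symm⟩
  obtain ⟨hg, rfl⟩ := Prod.ext_iff.1 (congrArg Subtype.val hge)
  exact ⟨⟨g, hg⟩⟩

end CategoryTheory.ActionCategory

theorem nerve_actionCategory_iso_cechNerve {G E : Type u} {B : Type v}
    [Group G] [MulAction G E] (p : E → B)
    (hp : ∀ (g : G) (e : E), p (g • e) = p e)
    (hshear : Function.Bijective (shearMap p hp)) :
    ∃ Φ : nerve (ActionCategory G E) ≅ cechSSet p,
      ∀ (m : SimplexCategoryᵒᵖ) (σ : ComposableArrows (ActionCategory G E) m.unop.len)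
        (i : Fin (m.unop.len + 1)),
        (Φ.hom.app m σ :
            {f : Fin (m.unop.len + 1) → E // ∀ i j, p (f i) = p (f j)}).1 i =
          (σ.obj i).back := by
  have := ActionCategory.isThin_of_injective_shearMap hshear.1
  have := isIso_nerveToCechSSet (ActionCategory.apply_back_eq_of_hom hp)
    (ActionCategory.objEquiv G E).symm.bijective
    (ActionCategory.nonempty_hom_of_surjective_shearMap hshear.2)
  exact ⟨asIso (nerveToCechSSet p _ (ActionCategory.apply_back_eq_of_hom hp)),
    fun _ _ _ => rfl⟩
end
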